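/- arXiv:2203.04474 — 5 statements merged into one kernel-verified Lean document; each statement's English description precedes it below -/
import Mathlib

section
/- Let f(θ₁,θ₂) = (2/9)(4+2cos θ₁+2cos θ₂+cos θ₁ cos θ₂)(2-cos θ₁-cos θ₂). For all (θ₁,θ₂) in the high-frequency set T^H = [-π/2, 3π/2)² \ [-π/3, π/3)², one has 5/6 ≤ f(θ₁,θ₂) ≤ 16/9, and both bounds are attained. -/
open Real

lemma cos_le_half_aux {θ : ℝ} (h1 : -(π/2) ≤ θ) (h2 : θ < 3*π/2)
    (h3 : θ ∉ Set.Ico (-(π/3)) (π/3)) : Real.cos θ ≤ 1/2 := by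
  have hπ := Real.pi_pos
  rw [Set.mem_Ico, not_and_or, not_le, not_lt] at h3
  have hc3 : Real.cos (π/3) = 1/2 := Real.cos_pi_div_three
  rcases h3 with h | h
  · rw [← Real.cos_neg]
    calc Real.cos (-θ) ≤ Real.cos (π/3) := by
          apply Real.cos_le_cos_of_nonneg_of_le_pi (by positivity) (by linarith)
          linarith
      _ = 1/2 := hc3
  · rcases le_or_gt θ (π/2) with h' | h'
    · calc Real.cos θ ≤ Real.cos (π/3) := by
            apply Real.cos_le_cos_of_nonneg_of_le_pi (by positivity) (by linarith) h
        _ = 1/2 := hc3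
    · have := Real.cos_nonpos_of_pi_div_two_le_of_le h'.le (by linarith)
      linarith

lemma upper_aux (x y : ℝ) (hx1 : -1 ≤ x) (hx2 : x ≤ 1) (hy1 : -1 ≤ y) (hy2 : y ≤ 1) :
    (2/9) * (4 + 2*x + 2*y + x*y) * (2 - x - y) ≤ 16/9 := by
  nlinarith [sq_nonneg (x+y), sq_nonneg (x-y),
    mul_nonneg (mul_nonneg (sub_nonneg.2 hx2) (sub_nonneg.2 hy2)) (sq_nonneg (x+y)),
    sq_nonneg (x*y), mul_nonneg (sq_nonneg (x+y)) (sq_nonneg (x-y))]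

lemma lower_aux (x y : ℝ) (hx1 : -1 ≤ x) (hx2 : x ≤ 1) (hy1 : -1 ≤ y) (hy2 : y ≤ 1/2) :
    5/6 ≤ (2/9) * (4 + 2*x + 2*y + x*y) * (2 - x - y) := by
  nlinarith [mul_nonneg (sub_nonneg.2 hx2) (by linarith : (0:ℝ) ≤ x + 1),
    mul_nonneg (by linarith : (0:ℝ) ≤ 1/2 - y) (by linarith : (0:ℝ) ≤ y + 1),
    mul_nonneg (mul_nonneg (sub_nonneg.2 hx2) (by linarith : (0:ℝ) ≤ x + 1))
      (by linarith : (0:ℝ) ≤ 1/2 - y),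
    mul_nonneg (mul_nonneg (by linarith : (0:ℝ) ≤ 1/2 - y) (by linarith : (0:ℝ) ≤ y + 1))
      (by linarith : (0:ℝ) ≤ 1 - x)]

theorem stmt_3
    (f : ℝ × ℝ → ℝ)
    (hf : ∀ θ₁ θ₂ : ℝ, f (θ₁, θ₂) =
      (2/9) * (4 + 2*Real.cos θ₁ + 2*Real.cos θ₂ + Real.cos θ₁ * Real.cos θ₂) *
        (2 - Real.cos θ₁ - Real.cos θ₂))
    (TH : Set (ℝ × ℝ))
    (hTH : TH = (Set.Ico (-(π/2)) (3*π/2) ×ˢ Set.Ico (-(π/2)) (3*π/2)) \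
                (Set.Ico (-(π/3)) (π/3) ×ˢ Set.Ico (-(π/3)) (π/3))) :
    (∀ θ ∈ TH, 5/6 ≤ f θ ∧ f θ ≤ 16/9) ∧
      (∃ θ ∈ TH, f θ = 5/6) ∧ (∃ θ ∈ TH, f θ = 16/9) := by
  have hπ := Real.pi_pos
  subst hTH
  refine ⟨?_, ?_, ?_⟩
  · rintro ⟨θ₁, θ₂⟩ ⟨⟨⟨ha1, ha2⟩, ⟨hb1, hb2⟩⟩, hnot⟩
    rw [hf]
    have hx1 := Real.neg_one_le_cos θ₁
    have hx2 := Real.cos_le_one θ₁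
    have hy1 := Real.neg_one_le_cos θ₂
    have hy2 := Real.cos_le_one θ₂
    constructor
    · rw [Set.mem_prod, not_and_or] at hnot
      rcases hnot with h | h
      · have hc := cos_le_half_aux ha1 ha2 h
        have := lower_aux (Real.cos θ₂) (Real.cos θ₁) hy1 hy2 hx1 hc
        linarith [this]
      · exact lower_aux (Real.cos θ₁) (Real.cos θ₂) hx1 hx2 hy1
          (cos_le_half_aux hb1 hb2 h)
    · exact upper_aux _ _ hx1 hx2 hy1 hy2
  · refine ⟨(0, π/3), ⟨⟨⟨by linarith, by linarith⟩, ⟨by linarith, by linarith⟩⟩, ?_⟩, ?_⟩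
    · rw [Set.mem_prod, not_and_or]
      right
      simp only [Set.mem_Ico, not_and_or, not_lt]
      right; rfl
    · rw [hf, Real.cos_zero, Real.cos_pi_div_three]
      ring
  · refine ⟨(π/2, π/2), ⟨⟨⟨by linarith, by linarith⟩, ⟨by linarith, by linarith⟩⟩, ?_⟩, ?_⟩
    · rw [Set.mem_prod, not_and_or]
      left
      simp only [Set.mem_Ico, not_and_or, not_lt]
      right; linarith
    · rw [hf, Real.cos_pi_div_two]
      ring
end

section
/- The map (cos θ₁, cos θ₂) restricted to T^H = [-π/2,3π/2)² \ [-π/3,π/3)² has image exactly D = ([-1,1]×[-1,1/2]) ∪ ([-1,1/2]×[1/2,1]). -/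
open Real

lemma cos_le_half_aux_s7 {t : ℝ} (ht1 : -(π/2) ≤ t) (ht2 : t < 3*π/2)
    (hnt : ¬(-(π/3) ≤ t ∧ t < π/3)) : Real.cos t ≤ 1/2 := by
  have hπ : (0:ℝ) < π := Real.pi_pos
  rcases lt_or_ge t (-(π/3)) with h | h
  · rw [← Real.cos_neg]
    calc Real.cos (-t) ≤ Real.cos (π/3) :=
          Real.cos_le_cos_of_nonneg_of_le_pi (by positivity) (by linarith) (by linarith)
      _ = 1/2 := Real.cos_pi_div_three
  · have h3 : π/3 ≤ t := by
      by_contra hc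
      exact hnt ⟨h, lt_of_not_ge hc⟩
    rcases le_or_gt t π with h4 | h4
    · calc Real.cos t ≤ Real.cos (π/3) :=
            Real.cos_le_cos_of_nonneg_of_le_pi (by positivity) h4 h3
        _ = 1/2 := Real.cos_pi_div_three
    · have : Real.cos t ≤ 0 :=
        Real.cos_nonpos_of_pi_div_two_le_of_le (by linarith) (by linarith)
      linarith

lemma arccos_half_le {y : ℝ} (hy1 : -1 ≤ y) (hy2 : y ≤ 1/2) : π/3 ≤ Real.arccos y := by
  have hπ : (0:ℝ) < π := Real.pi_pos
  by_contra hc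
  push_neg at hc
  have h := Real.cos_lt_cos_of_nonneg_of_le_pi (Real.arccos_nonneg y) (by linarith) hc
  rw [Real.cos_pi_div_three, Real.cos_arccos hy1 (by linarith)] at h
  linarith

theorem stmt_7 :
    (fun θ : ℝ × ℝ => ((Real.cos θ.1, Real.cos θ.2) : ℝ × ℝ)) ''
        ((Set.Ico (-(π/2)) (3*π/2) ×ˢ Set.Ico (-(π/2)) (3*π/2)) \
          (Set.Ico (-(π/3)) (π/3) ×ˢ Set.Ico (-(π/3)) (π/3))) =
      (Set.Icc (-1 : ℝ) 1 ×ˢ Set.Icc (-1 : ℝ) (1/2)) ∪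
        (Set.Icc (-1 : ℝ) (1/2) ×ˢ Set.Icc (1/2 : ℝ) 1) := by
  have hπ : (0:ℝ) < π := Real.pi_pos
  ext ⟨x, y⟩
  simp only [Set.mem_image, Set.mem_diff, Set.mem_prod, Set.mem_Ico, Set.mem_union,
    Set.mem_Icc, Prod.mk.injEq, Prod.exists]
  constructor
  · rintro ⟨a, b, ⟨⟨⟨ha1, ha2⟩, hb1, hb2⟩, hnot⟩, hx, hy⟩
    subst hx; subst hy
    have ha3 := Real.neg_one_le_cos a
    have ha4 := Real.cos_le_one a
    have hb3 := Real.neg_one_le_cos b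
    have hb4 := Real.cos_le_one b
    push_neg at hnot
    rcases le_or_gt (Real.cos b) (1/2) with hc | hc
    · exact Or.inl ⟨⟨ha3, ha4⟩, hb3, hc⟩
    · have hbB : -(π/3) ≤ b ∧ b < π/3 := by
        by_contra hB
        exact absurd (cos_le_half_aux_s7 hb1 hb2 hB) (not_le.2 hc)
      have haB : ¬(-(π/3) ≤ a ∧ a < π/3) := by
        intro hA
        exact absurd hbB.2 (not_lt.2 (hnot hA hbB.1))
      exact Or.inr ⟨⟨ha3, cos_le_half_aux_s7 ha1 ha2 haB⟩, le_of_lt hc, hb4⟩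
  · rintro (⟨⟨hx1, hx2⟩, hy1, hy2⟩ | ⟨⟨hx1, hx2⟩, hy1, hy2⟩)
    · refine ⟨Real.arccos x, Real.arccos y, ⟨⟨⟨?_, ?_⟩, ?_, ?_⟩, ?_⟩,
        Real.cos_arccos hx1 hx2, Real.cos_arccos hy1 (by linarith)⟩
      · linarith [Real.arccos_nonneg x]
      · linarith [Real.arccos_le_pi x]
      · linarith [Real.arccos_nonneg y]
      · linarith [Real.arccos_le_pi y]
      · rintro ⟨-, -, hy3⟩
        exact absurd hy3 (not_lt.2 (arccos_half_le hy1 hy2))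
    · refine ⟨Real.arccos x, Real.arccos y, ⟨⟨⟨?_, ?_⟩, ?_, ?_⟩, ?_⟩,
        Real.cos_arccos hx1 (by linarith), Real.cos_arccos (by linarith) hy2⟩
      · linarith [Real.arccos_nonneg x]
      · linarith [Real.arccos_le_pi x]
      · linarith [Real.arccos_nonneg y]
      · linarith [Real.arccos_le_pi y]
      · rintro ⟨⟨-, hx3⟩, -⟩
        exact absurd hx3 (not_lt.2 (arccos_half_le hx1 hx2))
end

section
/- Let a > 0 and b real with b ≤ a - 36/47 and a > 9/8, and assume a² - 9b/4 ≥ 0. Then (8/9)(a + √(a² - 9b/4)) - 1 > √(17/47). -/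
theorem stmt_13
    (a b : ℝ) (ha : 0 < a) (hb : b ≤ a - 36/47) (ha9 : 9/8 < a)
    (hdisc : 0 ≤ a^2 - 9*b/4) :
    (8/9) * (a + Real.sqrt (a^2 - 9*b/4)) - 1 > Real.sqrt (17/47) := by
  have hs0 : 0 ≤ Real.sqrt (17/47) := Real.sqrt_nonneg _
  have hs2 : Real.sqrt (17/47) ^ 2 = 17/47 := Real.sq_sqrt (by norm_num)
  have h1 : (9/8) * Real.sqrt (17/47) ≤ Real.sqrt (a^2 - 9*b/4) := by
    rw [show (9:ℝ)/8 * Real.sqrt (17/47) = Real.sqrt ((9/8)^2 * (17/47)) by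
      rw [Real.sqrt_mul (by positivity), Real.sqrt_sq (by norm_num)]]
    apply Real.sqrt_le_sqrt
    nlinarith [sq_nonneg (a - 9/8)]
  linarith
end

section
/- Let a, b be real with 0 < a < 9/8, b ≤ a - 36/47, and a² - 9b/4 ≥ 0. Then 1 - (8/9)a + (8/9)√(a² - 9b/4) > √(17/47). -/
theorem stmt_14
    (a b : ℝ) (ha : 0 < a) (ha9 : a < 9/8) (hb : b ≤ a - 36/47)
    (hdisc : 0 ≤ a^2 - 9*b/4) :
    1 - (8/9) * a + (8/9) * Real.sqrt (a^2 - 9*b/4) > Real.sqrt (17/47) := by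
  have key : (1377/3008 : ℝ) ≤ a^2 - 9*b/4 := by nlinarith [sq_nonneg (a - 9/8)]
  have h1 : Real.sqrt (1377/3008) ≤ Real.sqrt (a^2 - 9*b/4) := Real.sqrt_le_sqrt key
  have h2 : Real.sqrt (1377/3008 : ℝ) = (9/8) * Real.sqrt (17/47) := by
    rw [show (1377/3008:ℝ) = (9/8)^2 * (17/47) by norm_num, Real.sqrt_mul (by positivity),
      Real.sqrt_sq (by norm_num)]
  linarith
end

section
/- Suppose m₂ > 16/9. Then for the Uzawa complex-branch factor Ψ(m) = √(1 + (ω/α)(ωσ - σ - 1)m), with the constraint 1 + (ω/α)(ωσ-σ-1)m₂ = (1 - 2ωσ/(1+σ))² ≥ 0 and m₂ = 4ασ/(1+σ)², one has Ψ(5/6) ≥ √(1 - 5/(6·(16/9))) = √34/8. -/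
theorem stmt_17
    (α σ ω m₂ : ℝ) (hα : 0 < α) (hσ : 0 < σ) (hω : 0 < ω)
    (hm₂ : m₂ = 4*α*σ/(1+σ)^2) (hlarge : 16/9 < m₂)
    (hconstraint : 1 + (ω/α) * (ω*σ - σ - 1) * m₂ = (1 - 2*ω*σ/(1+σ))^2) :
    Real.sqrt (1 + (ω/α) * (ω*σ - σ - 1) * (5/6)) ≥
        Real.sqrt (1 - 5/(6*(16/9))) ∧
      Real.sqrt (1 - 5/(6*(16/9))) = Real.sqrt 34 / 8 := by
  constructor
  · apply Real.sqrt_le_sqrt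
    set c := (ω/α) * (ω*σ - σ - 1) with hc
    have h1 : c * m₂ ≥ -1 := by nlinarith [sq_nonneg (1 - 2*ω*σ/(1+σ))]
    rcases le_or_gt 0 c with h | h
    · nlinarith
    · nlinarith [mul_pos (neg_pos.mpr h) (by linarith : (0:ℝ) < m₂ - 16/9)]
  · have : (1 - 5/(6*(16/9)) : ℝ) = 34 / 64 := by norm_num
    have h64 : Real.sqrt 64 = 8 := by
      rw [show (64:ℝ) = 8^2 by norm_num]; exact Real.sqrt_sq (by norm_num)
    rw [this, Real.sqrt_div (by norm_num) 64, h64]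
end
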